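/- arXiv:math/0605066 — 3 statements merged into one kernel-verified Lean document; each statement's English description precedes it below -/
import Mathlib

section
/- Let W = (ω_1,…,ω_k) be a k-web on an open connected set U ⊆ ℂ² containing 0 and let X be a holomorphic vector field which is an infinitesimal automorphism of W, i.e. (L_X ω_i) ∧ ω_i = 0 on U for all i. If (η_1,…,η_k) is an abelian relation of W, then (L_X η_1,…,L_X η_k) is again an abelian relation of W: each L_X η_i is closed, (L_X η_i) ∧ ω_i = 0, and L_X η_1 + ⋯ + L_X η_k = 0. Moreover the map (η_1,…,η_k) ↦ (L_X η_1,…,L_X η_k) is ℂ-linear on abelian relations. -/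
open Complex Filter Topology

noncomputable section

/-- A point of the complex plane `ℂ²`. -/
abbrev Pt : Type := ℂ × ℂ

/-- A (holomorphic) 1-form `A dx + B dy` on (an open subset of) `ℂ²`,
identified with the pair of functions `(A, B)`. -/
abbrev Form1 : Type := (Pt → ℂ) × (Pt → ℂ)

/-- The complex partial derivative `∂f/∂x`. -/
noncomputable def pdx (f : Pt → ℂ) (p : Pt) : ℂ := fderiv ℂ f p (1, 0)

/-- The complex partial derivative `∂f/∂y`. -/
noncomputable def pdy (f : Pt → ℂ) (p : Pt) : ℂ := fderiv ℂ f p (0, 1)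

/-- The derivative `X(f) = P ∂f/∂x + Q ∂f/∂y` of `f` along the vector field `X = (P, Q)`. -/
noncomputable def Xf (P Q f : Pt → ℂ) (p : Pt) : ℂ := P p * pdx f p + Q p * pdy f p

/-- The contraction `i_X ω = A·P + B·Q` of the 1-form `ω = (A,B)` with `X = (P,Q)`. -/
noncomputable def contr (P Q : Pt → ℂ) (ω : Form1) (p : Pt) : ℂ := ω.1 p * P p + ω.2 p * Q p

/-- The wedge `ω ∧ ω' = A·B' − B·A'` of two 1-forms, as a function. -/
noncomputable def wedge (ω ω' : Form1) (p : Pt) : ℂ := ω.1 p * ω'.2 p - ω.2 p * ω'.1 p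

/-- The differential `df = (∂f/∂x, ∂f/∂y)` of a function. -/
noncomputable def fd (f : Pt → ℂ) : Form1 := (pdx f, pdy f)

/-- A 1-form `(A,B)` is closed on `U` if `∂A/∂y = ∂B/∂x` on `U`. -/
def IsClosedOn (ω : Form1) (U : Set Pt) : Prop := ∀ p ∈ U, pdy ω.1 p = pdx ω.2 p

/-- The Lie derivative `L_X ω` of the 1-form `ω = (A,B)` with respect to `X = (P,Q)`:
`L_X ω = (X(A) + A ∂P/∂x + B ∂Q/∂x, X(B) + A ∂P/∂y + B ∂Q/∂y)`. -/
noncomputable def lie (P Q : Pt → ℂ) (ω : Form1) : Form1 :=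
  (fun p => Xf P Q ω.1 p + ω.1 p * pdx P p + ω.2 p * pdx Q p,
   fun p => Xf P Q ω.2 p + ω.1 p * pdy P p + ω.2 p * pdy Q p)

/-- A 1-form is holomorphic on `U` if both its components are. -/
def AnalyticForm (ω : Form1) (U : Set Pt) : Prop :=
  AnalyticOnNhd ℂ ω.1 U ∧ AnalyticOnNhd ℂ ω.2 U
/-- A `k`-web on `U`: a `k`-tuple of holomorphic 1-forms, each nonvanishing on `U`,
pairwise transverse at the origin. -/
structure IsWeb {k : ℕ} (ω : Fin k → Form1) (U : Set Pt) : Prop where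
  analytic : ∀ i, AnalyticForm (ω i) U
  nonvanishing : ∀ i, ∀ p ∈ U, ((ω i).1 p, (ω i).2 p) ≠ (0, 0)
  transverse : ∀ i j, i ≠ j → wedge (ω i) (ω j) 0 ≠ 0

/-- An abelian relation `(η_1, …, η_k)` on `V` of the web given by `(ω_1, …, ω_k)`. -/
structure IsAbelianRelOn {k : ℕ} (ω : Fin k → Form1) (η : Fin k → Form1) (V : Set Pt) :
    Prop where
  analytic : ∀ i, AnalyticForm (η i) V
  closed : ∀ i, IsClosedOn (η i) V
  tangent : ∀ i, ∀ p ∈ V, wedge (η i) (ω i) p = 0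
  sum_fst : ∀ p ∈ V, ∑ i, (η i).1 p = 0
  sum_snd : ∀ p ∈ V, ∑ i, (η i).2 p = 0

/-- `U` is a polydisc centered at the origin. -/
def IsPolydisc (U : Set Pt) : Prop :=
  ∃ r s : ℝ, 0 < r ∧ 0 < s ∧ U = Metric.ball (0 : ℂ) r ×ˢ Metric.ball (0 : ℂ) s

/-- `X = (P,Q)` is an infinitesimal automorphism of the web `(ω_1, …, ω_k)` on `U`:
`(L_X ω_i) ∧ ω_i = 0` on `U` for all `i`. -/
def IsInfAut (P Q : Pt → ℂ) {k : ℕ} (ω : Fin k → Form1) (U : Set Pt) : Prop :=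
  ∀ i, ∀ p ∈ U, wedge (lie P Q (ω i)) (ω i) p = 0

/-- `X = (P,Q)` is transverse to the web `(ω_1, …, ω_k)` on `U`:
`i_X ω_i` is nonvanishing on `U` for all `i`. -/
def IsTransverseTo (P Q : Pt → ℂ) {k : ℕ} (ω : Fin k → Form1) (U : Set Pt) : Prop :=
  ∀ i, ∀ p ∈ U, contr P Q (ω i) p ≠ 0

/-- `u` is the canonical first integral of the 1-form `ω` with respect to `X = (P,Q)` on `U`:
`u` is holomorphic, `u(0) = 0` and `du = ω / (i_X ω)`. -/
def IsCanonicalFI (P Q : Pt → ℂ) (ω : Form1) (u : Pt → ℂ) (U : Set Pt) : Prop :=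
  AnalyticOnNhd ℂ u U ∧ u 0 = 0 ∧
    ∀ p ∈ U, pdx u p = ω.1 p / contr P Q ω p ∧ pdy u p = ω.2 p / contr P Q ω p


/-! For a closed form `η`, Cartan's formula `L_X η = d(i_X η) + i_X dη` reduces to
`L_X η = d(i_X η)`, which is closed by the symmetry of mixed partials. The Lie derivative is a
derivation for the wedge product, so `L_X η ∧ ω = L_X (η ∧ ω) - η ∧ L_X ω`: the first term
vanishes because `η ∧ ω ≡ 0`, the second because `η` and `L_X ω` are both proportional to the
nonvanishing `ω` (this is where the infinitesimal automorphism enters). Finally `L_X` is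
`ℂ`-linear and local, so it preserves `∑ η_i = 0`. -/

section Calculus

variable {f : Pt → ℂ} {p : Pt}

lemma fderiv_apply_eq_zero_of_eqOn_zero {U : Set Pt} (hU : IsOpen U) (hf : Set.EqOn f 0 U)
    (hp : p ∈ U) (v : Pt) : fderiv ℂ f p v = 0 := by
  rw [(hf.eventuallyEq_of_mem (hU.mem_nhds hp)).fderiv_eq]
  simp

lemma pdy_pdx_comm (hf : ContDiffAt ℂ 2 f p) : pdy (pdx f) p = pdx (pdy f) p := by
  have hd : DifferentiableAt ℂ (fderiv ℂ f) p :=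
    (hf.fderiv_right (m := 1) le_rfl).differentiableAt one_ne_zero
  have hsecond : ∀ v w : Pt,
      fderiv ℂ (fun q => fderiv ℂ f q v) p w = fderiv ℂ (fderiv ℂ f) p w v := fun v w => by
    rw [fderiv_clm_apply hd (differentiableAt_const v)]
    simp
  change fderiv ℂ (fun q => fderiv ℂ f q (1, 0)) p (0, 1)
    = fderiv ℂ (fun q => fderiv ℂ f q (0, 1)) p (1, 0)
  rw [hsecond, hsecond]
  exact hf.isSymmSndFDerivAt (by simp) _ _

lemma analyticOnNhd_pdx {U : Set Pt} (hf : AnalyticOnNhd ℂ f U) : AnalyticOnNhd ℂ (pdx f) U :=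
  (ContinuousLinearMap.apply ℂ ℂ ((1, 0) : Pt)).comp_analyticOnNhd hf.fderiv

lemma analyticOnNhd_pdy {U : Set Pt} (hf : AnalyticOnNhd ℂ f U) : AnalyticOnNhd ℂ (pdy f) U :=
  (ContinuousLinearMap.apply ℂ ℂ ((0, 1) : Pt)).comp_analyticOnNhd hf.fderiv

end Calculus

section VectorField

variable {P Q f g : Pt → ℂ} {p : Pt}

lemma Xf_eq_fderiv : Xf P Q f p = fderiv ℂ f p (P p, Q p) := by
  have hsplit : ((P p, Q p) : Pt) = P p • ((1, 0) : Pt) + Q p • ((0, 1) : Pt) := by simp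
  rw [hsplit, map_add, map_smul, map_smul, Xf, pdx, pdy, smul_eq_mul, smul_eq_mul]

lemma Xf_mul (hf : DifferentiableAt ℂ f p) (hg : DifferentiableAt ℂ g p) :
    Xf P Q (fun q => f q * g q) p = Xf P Q f p * g p + f p * Xf P Q g p := by
  simp only [Xf_eq_fderiv, fderiv_fun_mul hf hg, add_apply, smul_apply, smul_eq_mul]
  ring

lemma Xf_sub (hf : DifferentiableAt ℂ f p) (hg : DifferentiableAt ℂ g p) :
    Xf P Q (fun q => f q - g q) p = Xf P Q f p - Xf P Q g p := by
  simp only [Xf_eq_fderiv, fderiv_fun_sub hf hg, sub_apply]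

lemma Xf_linear_combination (c c' : ℂ) (hf : DifferentiableAt ℂ f p)
    (hg : DifferentiableAt ℂ g p) :
    Xf P Q (fun q => c * f q + c' * g q) p = c * Xf P Q f p + c' * Xf P Q g p := by
  simp only [Xf_eq_fderiv, fderiv_fun_add (hf.const_mul c) (hg.const_mul c'),
    fderiv_const_mul hf, fderiv_const_mul hg, add_apply, smul_apply, smul_eq_mul]

lemma Xf_sum {ι : Type*} (s : Finset ι) {f : ι → Pt → ℂ}
    (hf : ∀ i ∈ s, DifferentiableAt ℂ (f i) p) :
    Xf P Q (fun q => ∑ i ∈ s, f i q) p = ∑ i ∈ s, Xf P Q (f i) p := by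
  simp only [Xf_eq_fderiv, fderiv_fun_sum hf, sum_apply]

lemma Xf_eq_zero_of_eqOn_zero {U : Set Pt} (hU : IsOpen U) (hf : Set.EqOn f 0 U) (hp : p ∈ U) :
    Xf P Q f p = 0 := by
  rw [Xf_eq_fderiv, fderiv_apply_eq_zero_of_eqOn_zero hU hf hp]

end VectorField

section LieDerivative

variable {P Q : Pt → ℂ} {η ω : Form1} {p : Pt}

/-- Cartan's formula `L_X η = d (i_X η) + i_X dη`, with `dη = (∂B/∂x - ∂A/∂y) dx ∧ dy`. -/
lemma lie_eq_fd_contr_add (hA : DifferentiableAt ℂ η.1 p) (hB : DifferentiableAt ℂ η.2 p)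
    (hP : DifferentiableAt ℂ P p) (hQ : DifferentiableAt ℂ Q p) :
    (lie P Q η).1 p = (fd (contr P Q η)).1 p - Q p * (pdx η.2 p - pdy η.1 p) ∧
      (lie P Q η).2 p = (fd (contr P Q η)).2 p + P p * (pdx η.2 p - pdy η.1 p) := by
  rw [show contr P Q η = fun q => η.1 q * P q + η.2 q * Q q from rfl]
  simp only [lie, Xf, fd, pdx, pdy, fderiv_fun_add (hA.fun_mul hP) (hB.fun_mul hQ),
    fderiv_fun_mul hA hP, fderiv_fun_mul hB hQ, add_apply, smul_apply, smul_eq_mul]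
  constructor <;> ring

lemma wedge_lie_add_wedge_lie (hη₁ : DifferentiableAt ℂ η.1 p)
    (hη₂ : DifferentiableAt ℂ η.2 p) (hω₁ : DifferentiableAt ℂ ω.1 p)
    (hω₂ : DifferentiableAt ℂ ω.2 p) :
    wedge (lie P Q η) ω p + wedge η (lie P Q ω) p
      = Xf P Q (wedge η ω) p + (pdx P p + pdy Q p) * wedge η ω p := by
  have hXwedge : Xf P Q (wedge η ω) p
      = Xf P Q η.1 p * ω.2 p + η.1 p * Xf P Q ω.2 p
        - (Xf P Q η.2 p * ω.1 p + η.2 p * Xf P Q ω.1 p) := by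
    rw [show wedge η ω = fun q => η.1 q * ω.2 q - η.2 q * ω.1 q from rfl,
      Xf_sub (hη₁.fun_mul hω₂) (hη₂.fun_mul hω₁), Xf_mul hη₁ hω₂, Xf_mul hη₂ hω₁]
  rw [hXwedge]
  simp only [wedge, lie]
  ring

lemma wedge_eq_zero_trans {θ : Form1}
    (hω : (ω.1 p, ω.2 p) ≠ (0, 0)) (hη : wedge η ω p = 0) (hθ : wedge θ ω p = 0) :
    wedge η θ p = 0 := by
  simp only [wedge] at hη hθ ⊢
  by_cases hω₁ : ω.1 p = 0
  · have hω₂ : ω.2 p ≠ 0 := fun h => hω (by simp [hω₁, h])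
    apply mul_left_cancel₀ hω₂
    linear_combination θ.2 p * hη - η.2 p * hθ
  · apply mul_left_cancel₀ hω₁
    linear_combination θ.1 p * hη - η.1 p * hθ

lemma lie_linear_combination (c c' : ℂ) {η' : Form1} (hA : DifferentiableAt ℂ η.1 p)
    (hB : DifferentiableAt ℂ η.2 p) (hA' : DifferentiableAt ℂ η'.1 p)
    (hB' : DifferentiableAt ℂ η'.2 p) :
    (lie P Q (fun q => c * η.1 q + c' * η'.1 q, fun q => c * η.2 q + c' * η'.2 q)).1 p
        = c * (lie P Q η).1 p + c' * (lie P Q η').1 p ∧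
      (lie P Q (fun q => c * η.1 q + c' * η'.1 q, fun q => c * η.2 q + c' * η'.2 q)).2 p
        = c * (lie P Q η).2 p + c' * (lie P Q η').2 p := by
  simp only [lie, Xf_linear_combination c c' hA hA', Xf_linear_combination c c' hB hB']
  constructor <;> ring

lemma lie_finset_sum {ι : Type*} (s : Finset ι) {η : ι → Form1}
    (hA : ∀ i ∈ s, DifferentiableAt ℂ (η i).1 p) (hB : ∀ i ∈ s, DifferentiableAt ℂ (η i).2 p) :
    (lie P Q (fun q => ∑ i ∈ s, (η i).1 q, fun q => ∑ i ∈ s, (η i).2 q)).1 p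
        = ∑ i ∈ s, (lie P Q (η i)).1 p ∧
      (lie P Q (fun q => ∑ i ∈ s, (η i).1 q, fun q => ∑ i ∈ s, (η i).2 q)).2 p
        = ∑ i ∈ s, (lie P Q (η i)).2 p := by
  simp only [lie, Xf_sum s hA, Xf_sum s hB, Finset.sum_add_distrib, Finset.sum_mul, and_self]

lemma lie_eq_zero_of_eqOn_zero {U : Set Pt} (hU : IsOpen U) (hA : Set.EqOn η.1 0 U)
    (hB : Set.EqOn η.2 0 U) (hp : p ∈ U) : (lie P Q η).1 p = 0 ∧ (lie P Q η).2 p = 0 := by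
  simp only [lie, Xf_eq_zero_of_eqOn_zero hU hA hp, Xf_eq_zero_of_eqOn_zero hU hB hp, hA hp,
    hB hp, Pi.zero_apply]
  constructor <;> ring

end LieDerivative

section Forms

variable {P Q : Pt → ℂ} {η ω : Form1} {U : Set Pt}

lemma AnalyticForm.lie (hη : AnalyticForm η U) (hP : AnalyticOnNhd ℂ P U)
    (hQ : AnalyticOnNhd ℂ Q U) : AnalyticForm (lie P Q η) U :=
  ⟨(((hP.mul (analyticOnNhd_pdx hη.1)).add (hQ.mul (analyticOnNhd_pdy hη.1))).add
      (hη.1.mul (analyticOnNhd_pdx hP))).add (hη.2.mul (analyticOnNhd_pdx hQ)),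
    (((hP.mul (analyticOnNhd_pdx hη.2)).add (hQ.mul (analyticOnNhd_pdy hη.2))).add
      (hη.1.mul (analyticOnNhd_pdy hP))).add (hη.2.mul (analyticOnNhd_pdy hQ))⟩

lemma isClosedOn_fd {u : Pt → ℂ} (hu : ∀ p ∈ U, ContDiffAt ℂ 2 u p) : IsClosedOn (fd u) U :=
  fun p hp => pdy_pdx_comm (hu p hp)

lemma IsClosedOn.congr {ω' : Form1} (hU : IsOpen U) (h : IsClosedOn ω U)
    (h₁ : Set.EqOn ω.1 ω'.1 U) (h₂ : Set.EqOn ω.2 ω'.2 U) : IsClosedOn ω' U := fun p hp => by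
  have hnhds := hU.mem_nhds hp
  simp only [pdx, pdy, ← (h₁.eventuallyEq_of_mem hnhds).fderiv_eq,
    ← (h₂.eventuallyEq_of_mem hnhds).fderiv_eq]
  exact h p hp

lemma IsClosedOn.lie (hU : IsOpen U) (hclosed : IsClosedOn η U) (hη : AnalyticForm η U)
    (hP : AnalyticOnNhd ℂ P U) (hQ : AnalyticOnNhd ℂ Q U) : IsClosedOn (lie P Q η) U := by
  have hcontr : AnalyticOnNhd ℂ (contr P Q η) U := (hη.1.mul hP).add (hη.2.mul hQ)
  have hcartan := fun q (hq : q ∈ U) => lie_eq_fd_contr_add (P := P) (Q := Q)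
    (hη.1 q hq).differentiableAt (hη.2 q hq).differentiableAt (hP q hq).differentiableAt
    (hQ q hq).differentiableAt
  refine (isClosedOn_fd fun q hq => (hcontr q hq).contDiffAt).congr hU
    (fun q hq => ?_) (fun q hq => ?_)
  · rw [(hcartan q hq).1, hclosed q hq, sub_self, mul_zero, sub_zero]
  · rw [(hcartan q hq).2, hclosed q hq, sub_self, mul_zero, add_zero]

lemma wedge_lie_eq_zero (hU : IsOpen U) {p : Pt} (hp : p ∈ U) (hη : AnalyticForm η U)
    (hω : AnalyticForm ω U) (hω₀ : (ω.1 p, ω.2 p) ≠ (0, 0))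
    (htangent : ∀ q ∈ U, wedge η ω q = 0) (hinf : wedge (lie P Q ω) ω p = 0) :
    wedge (lie P Q η) ω p = 0 := by
  have hleibniz := wedge_lie_add_wedge_lie (P := P) (Q := Q) (hη.1 p hp).differentiableAt
    (hη.2 p hp).differentiableAt (hω.1 p hp).differentiableAt (hω.2 p hp).differentiableAt
  rw [wedge_eq_zero_trans hω₀ (htangent p hp) hinf,
    Xf_eq_zero_of_eqOn_zero hU htangent hp, htangent p hp] at hleibniz
  simpa using hleibniz

end Forms

lemma IsAbelianRelOn.lie {k : ℕ} {ω η : Fin k → Form1} {U : Set Pt} {P Q : Pt → ℂ}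
    (hη : IsAbelianRelOn ω η U) (hU : IsOpen U) (hω : ∀ i, AnalyticForm (ω i) U)
    (hω₀ : ∀ i, ∀ p ∈ U, ((ω i).1 p, (ω i).2 p) ≠ (0, 0)) (hP : AnalyticOnNhd ℂ P U)
    (hQ : AnalyticOnNhd ℂ Q U) (hinf : IsInfAut P Q ω U) :
    IsAbelianRelOn ω (fun i => lie P Q (η i)) U := by
  have hsum := fun p (hp : p ∈ U) => lie_finset_sum (P := P) (Q := Q) Finset.univ
    (fun i _ => ((hη.analytic i).1 p hp).differentiableAt)
    (fun i _ => ((hη.analytic i).2 p hp).differentiableAt)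
  have hzero := fun p (hp : p ∈ U) => lie_eq_zero_of_eqOn_zero (P := P) (Q := Q)
    (η := (fun q => ∑ i, (η i).1 q, fun q => ∑ i, (η i).2 q)) hU hη.sum_fst hη.sum_snd hp
  exact
    { analytic := fun i => (hη.analytic i).lie hP hQ
      closed := fun i => (hη.closed i).lie hU (hη.analytic i) hP hQ
      tangent := fun i p hp => wedge_lie_eq_zero hU hp (hη.analytic i) (hω i) (hω₀ i p hp)
        (hη.tangent i) (hinf i p hp)
      sum_fst := fun p hp => (hsum p hp).1.symm.trans (hzero p hp).1
      sum_snd := fun p hp => (hsum p hp).2.symm.trans (hzero p hp).2 }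

theorem stmt_2_general (k : ℕ) (U : Set Pt) (hUopen : IsOpen U)
    (ω : Fin k → Form1) (hweb : IsWeb ω U) (P Q : Pt → ℂ)
    (hP : AnalyticOnNhd ℂ P U) (hQ : AnalyticOnNhd ℂ Q U)
    (hinf : IsInfAut P Q ω U) :
    (∀ η : Fin k → Form1, IsAbelianRelOn ω η U →
      IsAbelianRelOn ω (fun i => lie P Q (η i)) U) ∧
    (∀ η η' : Fin k → Form1, ∀ c c' : ℂ,
      IsAbelianRelOn ω η U → IsAbelianRelOn ω η' U → ∀ i, ∀ p ∈ U,
        (lie P Q (fun q => c * (η i).1 q + c' * (η' i).1 q,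
                  fun q => c * (η i).2 q + c' * (η' i).2 q)).1 p
          = c * (lie P Q (η i)).1 p + c' * (lie P Q (η' i)).1 p ∧
        (lie P Q (fun q => c * (η i).1 q + c' * (η' i).1 q,
                  fun q => c * (η i).2 q + c' * (η' i).2 q)).2 p
          = c * (lie P Q (η i)).2 p + c' * (lie P Q (η' i)).2 p) :=
  ⟨fun _ hη => hη.lie hUopen hweb.analytic hweb.nonvanishing hP hQ hinf,
    fun _ _ c c' hη hη' i p hp => lie_linear_combination c c'
      ((hη.analytic i).1 p hp).differentiableAt ((hη.analytic i).2 p hp).differentiableAt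
      ((hη'.analytic i).1 p hp).differentiableAt ((hη'.analytic i).2 p hp).differentiableAt⟩

/-- If `X` is an infinitesimal automorphism of the `k`-web
`W = (ω_1,…,ω_k)` on an open connected `U ∋ 0`, then `L_X` maps abelian relations of `W`
to abelian relations of `W`, and does so `ℂ`-linearly. -/
theorem stmt_2 (k : ℕ) (U : Set Pt) (hUopen : IsOpen U) (hUconn : IsConnected U)
    (h0U : (0 : Pt) ∈ U) (ω : Fin k → Form1) (hweb : IsWeb ω U) (P Q : Pt → ℂ)
    (hP : AnalyticOnNhd ℂ P U) (hQ : AnalyticOnNhd ℂ Q U)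
    (hinf : IsInfAut P Q ω U) :
    (∀ η : Fin k → Form1, IsAbelianRelOn ω η U →
      IsAbelianRelOn ω (fun i => lie P Q (η i)) U) ∧
    (∀ η η' : Fin k → Form1, ∀ c c' : ℂ,
      IsAbelianRelOn ω η U → IsAbelianRelOn ω η' U → ∀ i, ∀ p ∈ U,
        (lie P Q (fun q => c * (η i).1 q + c' * (η' i).1 q,
                  fun q => c * (η i).2 q + c' * (η' i).2 q)).1 p
          = c * (lie P Q (η i)).1 p + c' * (lie P Q (η' i)).1 p ∧
        (lie P Q (fun q => c * (η i).1 q + c' * (η' i).1 q,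
                  fun q => c * (η i).2 q + c' * (η' i).2 q)).2 p
          = c * (lie P Q (η i)).2 p + c' * (lie P Q (η' i)).2 p) :=
  stmt_2_general k U hUopen ω hweb P Q hP hQ hinf
end
end

section
/- Let U ⊆ ℂ² be open containing 0, u : U → ℂ a holomorphic function with du(0) ≠ (0,0), and η a closed holomorphic 1-form on U with η ∧ du = 0 identically. Then there exist a neighborhood V of 0 in ℂ², a neighborhood D of u(0) in ℂ, and a holomorphic function f : D → ℂ such that η = (f∘u)·du on V, i.e. the germ of η at 0 equals the germ of ((f∘u)·∂u/∂x, (f∘u)·∂u/∂y). -/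
open Complex Filter Topology

noncomputable section

/-!
After swapping the coordinates we may assume `∂u/∂x(0) ≠ 0`. Near `0` the condition `η ∧ du = 0`
then gives `η = h du` with `h = A / (∂u/∂x)`, and since `d(du) = 0` (symmetry of second
derivatives), closedness of `η` becomes `dh ∧ du = 0`. In the holomorphic chart `Φ = (u, y)` at `0`
the function `h ∘ Φ⁻¹` therefore has vanishing `∂/∂y`, so on a ball it depends on the first
coordinate alone; that is, `h = f ∘ u`.
-/

theorem fderiv_apply_eq_pdx_pdy (f : Pt → ℂ) (p w : Pt) :
    fderiv ℂ f p w = w.1 * pdx f p + w.2 * pdy f p := by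
  have hw : w = w.1 • ((1, 0) : Pt) + w.2 • ((0, 1) : Pt) := by simp
  rw [hw, map_add, map_smul, map_smul]
  simp [pdx, pdy]

theorem AnalyticAt.pdx {f : Pt → ℂ} {p : Pt} (hf : AnalyticAt ℂ f p) :
    AnalyticAt ℂ (pdx f) p :=
  ((ContinuousLinearMap.apply ℂ ℂ ((1, 0) : Pt)).analyticAt _).comp hf.fderiv

theorem AnalyticAt.pdy {f : Pt → ℂ} {p : Pt} (hf : AnalyticAt ℂ f p) :
    AnalyticAt ℂ (pdy f) p :=
  ((ContinuousLinearMap.apply ℂ ℂ ((0, 1) : Pt)).analyticAt _).comp hf.fderiv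

theorem pdx_mul {f g : Pt → ℂ} {p : Pt} (hf : DifferentiableAt ℂ f p)
    (hg : DifferentiableAt ℂ g p) :
    pdx (fun q => f q * g q) p = pdx f p * g p + f p * pdx g p := by
  simp only [pdx, fderiv_fun_mul hf hg, add_apply, smul_apply, smul_eq_mul]
  ring

theorem pdy_mul {f g : Pt → ℂ} {p : Pt} (hf : DifferentiableAt ℂ f p)
    (hg : DifferentiableAt ℂ g p) :
    pdy (fun q => f q * g q) p = pdy f p * g p + f p * pdy g p := by
  simp only [pdy, fderiv_fun_mul hf hg, add_apply, smul_apply, smul_eq_mul]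
  ring

theorem pdx_comp_swap (f : Pt → ℂ) (p : Pt) : pdx (fun q => f q.swap) p = pdy f p.swap := by
  rw [pdx, show (fun q : Pt => f q.swap) = f ∘ ContinuousLinearEquiv.prodComm ℂ ℂ ℂ from rfl,
    ContinuousLinearEquiv.comp_right_fderiv]
  rfl

theorem pdy_comp_swap (f : Pt → ℂ) (p : Pt) : pdy (fun q => f q.swap) p = pdx f p.swap := by
  rw [pdy, show (fun q : Pt => f q.swap) = f ∘ ContinuousLinearEquiv.prodComm ℂ ℂ ℂ from rfl,
    ContinuousLinearEquiv.comp_right_fderiv]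
  rfl

theorem fderiv_fderiv_apply {𝕜 E F : Type*} [NontriviallyNormedField 𝕜] [NormedAddCommGroup E]
    [NormedSpace 𝕜 E] [NormedAddCommGroup F] [NormedSpace 𝕜 F] {f : E → F} {p : E}
    (hf : DifferentiableAt 𝕜 (fderiv 𝕜 f) p) (v w : E) :
    fderiv 𝕜 (fun q => fderiv 𝕜 f q v) p w = fderiv 𝕜 (fderiv 𝕜 f) p w v := by
  rw [fderiv_clm_apply hf (differentiableAt_const v)]
  simp

theorem pdy_pdx_eq_pdx_pdy {f : Pt → ℂ} {p : Pt} (hf : AnalyticAt ℂ f p) :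
    pdy (pdx f) p = pdx (pdy f) p := by
  have hd := hf.fderiv.differentiableAt
  change fderiv ℂ (fun q => fderiv ℂ f q (1, 0)) p (0, 1)
    = fderiv ℂ (fun q => fderiv ℂ f q (0, 1)) p (1, 0)
  rw [fderiv_fderiv_apply hd, fderiv_fderiv_apply hd]
  exact hf.contDiffAt.isSymmSndFDerivAt_of_omega _ _

theorem wedge_fd_fd_eq_zero_of_closed {h u A B : Pt → ℂ} {p : Pt}
    (hh : DifferentiableAt ℂ h p) (hu : AnalyticAt ℂ u p)
    (hA : A =ᶠ[𝓝 p] fun q => h q * pdx u q) (hB : B =ᶠ[𝓝 p] fun q => h q * pdy u q)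
    (hclosed : pdy A p = pdx B p) : wedge (fd h) (fd u) p = 0 := by
  have hA' : pdy A p = pdy h p * pdx u p + h p * pdy (pdx u) p := by
    rw [pdy, hA.fderiv_eq, ← pdy, pdy_mul hh hu.pdx.differentiableAt]
  have hB' : pdx B p = pdx h p * pdy u p + h p * pdx (pdy u) p := by
    rw [pdx, hB.fderiv_eq, ← pdx, pdx_mul hh hu.pdy.differentiableAt]
  rw [hA', hB', pdy_pdx_eq_pdx_pdy hu] at hclosed
  simp only [wedge, fd]
  linear_combination -hclosed

theorem fderiv_apply_eq_zero_of_wedge_eq_zero {h u : Pt → ℂ} {p w : Pt}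
    (hwedge : wedge (fd h) (fd u) p = 0) (hux : pdx u p ≠ 0) (hw : fderiv ℂ u p w = 0) :
    fderiv ℂ h p w = 0 := by
  rw [fderiv_apply_eq_pdx_pdy] at hw ⊢
  simp only [wedge, fd] at hwedge
  refine mul_left_cancel₀ hux ?_
  linear_combination pdx h p * hw - w.2 * hwedge

theorem apply_mk_eq_of_pdy_eq_zero {g : Pt → ℂ} {c : Pt} {r : ℝ}
    (hg : ∀ q ∈ Metric.ball c r, DifferentiableAt ℂ g q ∧ pdy g q = 0) {z y : ℂ}
    (hzy : (z, y) ∈ Metric.ball c r) : g (z, y) = g (z, c.2) := by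
  rw [Metric.mem_ball, Prod.dist_eq, max_lt_iff] at hzy
  have hslice : ∀ t ∈ Metric.ball c.2 r, HasDerivAt (fun t => g (z, t)) 0 t := by
    intro t ht
    have hzt : (z, t) ∈ Metric.ball c r := by
      rw [Metric.mem_ball, Prod.dist_eq, max_lt_iff]
      exact ⟨hzy.1, ht⟩
    have h := (hg _ hzt).1.hasFDerivAt.comp_hasDerivAt t
      ((hasDerivAt_const t z).prodMk (hasDerivAt_id t))
    rwa [← pdy, (hg _ hzt).2] at h
  exact Metric.isOpen_ball.is_const_of_deriv_eq_zero (convex_ball _ _).isPreconnected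
    (fun t ht => (hslice t ht).differentiableAt.differentiableWithinAt)
    (fun t ht => (hslice t ht).deriv) hzy.2 (Metric.mem_ball_self (dist_nonneg.trans_lt hzy.2))

theorem exists_analyticAt_localInverse_of_pdx_ne_zero {u : Pt → ℂ} {p₀ : Pt}
    (hu : AnalyticAt ℂ u p₀) (hux : pdx u p₀ ≠ 0) :
    ∃ Ψ : Pt → Pt, AnalyticAt ℂ Ψ (u p₀, p₀.2) ∧ (∀ᶠ p in 𝓝 p₀, Ψ (u p, p.2) = p) ∧
      ∀ᶠ q in 𝓝 (u p₀, p₀.2), (u (Ψ q), (Ψ q).2) = q := by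
  set L : Pt →L[ℂ] Pt := (fderiv ℂ u p₀).prod (ContinuousLinearMap.snd ℂ ℂ ℂ)
  have hinj : Function.Injective L := by
    rw [injective_iff_map_eq_zero]
    intro w hw
    simp only [L, ContinuousLinearMap.prod_apply, ContinuousLinearMap.coe_snd', Prod.mk_eq_zero,
      fderiv_apply_eq_pdx_pdy] at hw
    obtain ⟨hw1, hw2⟩ := hw
    rw [hw2, zero_mul, add_zero, mul_eq_zero] at hw1
    exact Prod.ext (hw1.resolve_right hux) hw2
  set e : Pt ≃L[ℂ] Pt :=
    (LinearEquiv.ofInjectiveEndo (L : Pt →ₗ[ℂ] Pt) hinj).toContinuousLinearEquiv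
  have hΦ : HasStrictFDerivAt (fun p : Pt => (u p, p.2)) (e : Pt →L[ℂ] Pt) p₀ :=
    hu.hasStrictFDerivAt.prodMk (ContinuousLinearMap.snd ℂ ℂ ℂ).hasStrictFDerivAt
  have hΨ := hΦ.toOpenPartialHomeomorph.analyticAt_symm' hΦ.mem_toOpenPartialHomeomorph_source
    (hu.prod analyticAt_snd) hΦ.hasFDerivAt.fderiv
  exact ⟨hΦ.localInverse, hΨ, hΦ.eventually_left_inverse, hΦ.eventually_right_inverse⟩

theorem pdy_comp_eq_zero_of_wedge_eq_zero {h u : Pt → ℂ} {Ψ : Pt → Pt} {q : Pt}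
    (hΨ : DifferentiableAt ℂ Ψ q) (hh : DifferentiableAt ℂ h (Ψ q))
    (hu : DifferentiableAt ℂ u (Ψ q)) (huΨ : u ∘ Ψ =ᶠ[𝓝 q] Prod.fst)
    (hwedge : wedge (fd h) (fd u) (Ψ q) = 0) (hux : pdx u (Ψ q) ≠ 0) :
    pdy (h ∘ Ψ) q = 0 := by
  have hker : fderiv ℂ u (Ψ q) (fderiv ℂ Ψ q (0, 1)) = 0 := by
    rw [← ContinuousLinearMap.comp_apply, ← fderiv_comp q hu hΨ, huΨ.fderiv_eq, fderiv_fst]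
    rfl
  rw [pdy, fderiv_comp q hh hΨ, ContinuousLinearMap.comp_apply]
  exact fderiv_apply_eq_zero_of_wedge_eq_zero hwedge hux hker

theorem exists_analyticAt_eventually_eq_comp_of_wedge_eq_zero {h u : Pt → ℂ} {p₀ : Pt}
    (hh : ∀ᶠ p in 𝓝 p₀, AnalyticAt ℂ h p) (hu : ∀ᶠ p in 𝓝 p₀, AnalyticAt ℂ u p)
    (hux : pdx u p₀ ≠ 0) (hwedge : ∀ᶠ p in 𝓝 p₀, wedge (fd h) (fd u) p = 0) :
    ∃ f : ℂ → ℂ, AnalyticAt ℂ f (u p₀) ∧ ∀ᶠ p in 𝓝 p₀, h p = f (u p) := by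
  obtain ⟨Ψ, hΨ, hleft, hright⟩ :=
    exists_analyticAt_localInverse_of_pdx_ne_zero hu.self_of_nhds hux
  have hΨp₀ : Ψ (u p₀, p₀.2) = p₀ := hleft.self_of_nhds
  have hux' : ∀ᶠ p in 𝓝 p₀, pdx u p ≠ 0 :=
    hu.self_of_nhds.pdx.continuousAt.eventually_ne hux
  have hgood : ∀ᶠ p in 𝓝 p₀,
      AnalyticAt ℂ h p ∧ AnalyticAt ℂ u p ∧ pdx u p ≠ 0 ∧ wedge (fd h) (fd u) p = 0 :=
    hh.and (hu.and (hux'.and hwedge))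
  have hg : ∀ᶠ q in 𝓝 (u p₀, p₀.2), AnalyticAt ℂ (h ∘ Ψ) q ∧ pdy (h ∘ Ψ) q = 0 := by
    have hgood' := hΨ.continuousAt.eventually (hΨp₀ ▸ hgood)
    filter_upwards [hgood', hΨ.eventually_analyticAt, hright.eventually_nhds] with
      q ⟨hhq, huq, huxq, hwq⟩ hΨq hrq
    refine ⟨hhq.comp hΨq, pdy_comp_eq_zero_of_wedge_eq_zero hΨq.differentiableAt
      hhq.differentiableAt huq.differentiableAt ?_ hwq huxq⟩
    filter_upwards [hrq] with q' hq' using congrArg Prod.fst hq'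
  obtain ⟨r, hr, hball⟩ := Metric.eventually_nhds_iff_ball.1 hg
  refine ⟨fun z => h (Ψ (z, p₀.2)), (hball _ (Metric.mem_ball_self hr)).1.comp
    (f := fun z => (z, p₀.2)) (analyticAt_id.prod analyticAt_const), ?_⟩
  have hΦ : ∀ᶠ p in 𝓝 p₀, (u p, p.2) ∈ Metric.ball (u p₀, p₀.2) r :=
    (hu.self_of_nhds.continuousAt.prodMk continuousAt_snd).eventually
      (Metric.ball_mem_nhds _ hr)
  filter_upwards [hleft, hΦ] with p hp hpr
  simpa only [Function.comp_apply, hp] using apply_mk_eq_of_pdy_eq_zero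
    (fun q hq => ⟨(hball q hq).1.differentiableAt, (hball q hq).2⟩) hpr

theorem exists_analyticAt_eventually_eq_comp_mul_fd_of_pdx_ne_zero {u : Pt → ℂ} {η : Form1}
    {p₀ : Pt} (hu : ∀ᶠ p in 𝓝 p₀, AnalyticAt ℂ u p) (hη : ∀ᶠ p in 𝓝 p₀, AnalyticAt ℂ η.1 p)
    (hclosed : ∀ᶠ p in 𝓝 p₀, pdy η.1 p = pdx η.2 p)
    (hwedge : ∀ᶠ p in 𝓝 p₀, wedge η (fd u) p = 0) (hux : pdx u p₀ ≠ 0) :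
    ∃ f : ℂ → ℂ, AnalyticAt ℂ f (u p₀) ∧
      ∀ᶠ p in 𝓝 p₀, η.1 p = f (u p) * pdx u p ∧ η.2 p = f (u p) * pdy u p := by
  set h : Pt → ℂ := fun p => η.1 p / pdx u p
  have hux' : ∀ᶠ p in 𝓝 p₀, pdx u p ≠ 0 :=
    hu.self_of_nhds.pdx.continuousAt.eventually_ne hux
  have hh : ∀ᶠ p in 𝓝 p₀, AnalyticAt ℂ h p := by
    filter_upwards [hu, hη, hux'] with p hup hηp huxp using hηp.div hup.pdx huxp
  have h₁ : ∀ᶠ p in 𝓝 p₀, η.1 p = h p * pdx u p := by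
    filter_upwards [hux'] with p huxp using (div_mul_cancel₀ _ huxp).symm
  have h₂ : ∀ᶠ p in 𝓝 p₀, η.2 p = h p * pdy u p := by
    filter_upwards [hux', hwedge] with p huxp hwp
    rw [div_mul_eq_mul_div, eq_div_iff huxp]
    simp only [wedge, fd] at hwp
    linear_combination -hwp
  have hdh : ∀ᶠ p in 𝓝 p₀, wedge (fd h) (fd u) p = 0 := by
    filter_upwards [hh, hu, h₁.eventually_nhds, h₂.eventually_nhds, hclosed] with
      p hhp hup h₁p h₂p hcp
    exact wedge_fd_fd_eq_zero_of_closed hhp.differentiableAt hup h₁p h₂p hcp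
  obtain ⟨f, hf, hhf⟩ := exists_analyticAt_eventually_eq_comp_of_wedge_eq_zero hh hu hux hdh
  refine ⟨f, hf, ?_⟩
  filter_upwards [h₁, h₂, hhf] with p h₁p h₂p hhp
  rw [← hhp]
  exact ⟨h₁p, h₂p⟩

theorem exists_analyticAt_eventually_eq_comp_mul_fd_of_pdy_ne_zero {u : Pt → ℂ} {η : Form1}
    {p₀ : Pt} (hu : ∀ᶠ p in 𝓝 p₀, AnalyticAt ℂ u p) (hη : ∀ᶠ p in 𝓝 p₀, AnalyticAt ℂ η.2 p)
    (hclosed : ∀ᶠ p in 𝓝 p₀, pdy η.1 p = pdx η.2 p)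
    (hwedge : ∀ᶠ p in 𝓝 p₀, wedge η (fd u) p = 0) (huy : pdy u p₀ ≠ 0) :
    ∃ f : ℂ → ℂ, AnalyticAt ℂ f (u p₀) ∧
      ∀ᶠ p in 𝓝 p₀, η.1 p = f (u p) * pdx u p ∧ η.2 p = f (u p) * pdy u p := by
  have hswap : Tendsto Prod.swap (𝓝 p₀.swap) (𝓝 p₀) :=
    continuous_swap.tendsto' _ _ (Prod.swap_swap p₀)
  have hanalytic {g : Pt → ℂ} (hg : ∀ᶠ p in 𝓝 p₀, AnalyticAt ℂ g p) :
      ∀ᶠ q in 𝓝 p₀.swap, AnalyticAt ℂ (fun q => g q.swap) q :=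
    (hswap.eventually hg).mono fun q hq => hq.comp (analyticAt_snd.prod analyticAt_fst)
  obtain ⟨f, hf, hηf⟩ := exists_analyticAt_eventually_eq_comp_mul_fd_of_pdx_ne_zero
    (η := (fun q => η.2 q.swap, fun q => η.1 q.swap)) (hanalytic hu) (hanalytic hη)
    ((hswap.eventually hclosed).mono fun q hq => by
      simp only [pdx_comp_swap, pdy_comp_swap, hq])
    ((hswap.eventually hwedge).mono fun q hq => by
      simp only [wedge, fd, pdx_comp_swap, pdy_comp_swap] at hq ⊢
      linear_combination -hq)
    (by rwa [pdx_comp_swap, Prod.swap_swap])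
  refine ⟨f, by rwa [Prod.swap_swap] at hf, ?_⟩
  filter_upwards [continuous_swap.continuousAt.eventually hηf] with p hp
  simp only [pdx_comp_swap, pdy_comp_swap, Prod.swap_swap] at hp
  exact hp.symm

/-- If `u` is holomorphic on an open `U ∋ 0` with `du(0) ≠ (0,0)` and `η`
is a closed holomorphic 1-form on `U` with `η ∧ du = 0`, then near `0` one has
`η = (f∘u)·du` for some holomorphic function `f` defined near `u(0)`. -/
theorem stmt_4 (U : Set Pt) (hUopen : IsOpen U) (h0U : (0 : Pt) ∈ U) (u : Pt → ℂ)
    (hu : AnalyticOnNhd ℂ u U) (hdu0 : (pdx u 0, pdy u 0) ≠ (0, 0)) (η : Form1)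
    (hη : AnalyticForm η U) (hclosed : IsClosedOn η U)
    (hwedge : ∀ p ∈ U, wedge η (fd u) p = 0) :
    ∃ V ∈ 𝓝 (0 : Pt), V ⊆ U ∧ ∃ D ∈ 𝓝 (u 0), ∃ f : ℂ → ℂ, AnalyticOnNhd ℂ f D ∧
      (∀ p ∈ V, u p ∈ D) ∧
      ∀ p ∈ V, η.1 p = f (u p) * pdx u p ∧ η.2 p = f (u p) * pdy u p := by
  have hU : ∀ᶠ p in 𝓝 (0 : Pt), p ∈ U := hUopen.mem_nhds h0U
  obtain ⟨f, hf, hηf⟩ : ∃ f : ℂ → ℂ, AnalyticAt ℂ f (u 0) ∧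
      ∀ᶠ p in 𝓝 0, η.1 p = f (u p) * pdx u p ∧ η.2 p = f (u p) * pdy u p := by
    have hdu0' : pdx u 0 ≠ 0 ∨ pdy u 0 ≠ 0 := by
      contrapose! hdu0
      rw [hdu0.1, hdu0.2]
    rcases hdu0' with hux | huy
    · exact exists_analyticAt_eventually_eq_comp_mul_fd_of_pdx_ne_zero (hU.mono hu)
        (hU.mono hη.1) (hU.mono hclosed) (hU.mono hwedge) hux
    · exact exists_analyticAt_eventually_eq_comp_mul_fd_of_pdy_ne_zero (hU.mono hu)
        (hU.mono hη.2) (hU.mono hclosed) (hU.mono hwedge) huy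
  have hfu : ∀ᶠ p in 𝓝 (0 : Pt), AnalyticAt ℂ f (u p) :=
    (hu 0 h0U).continuousAt.eventually hf.eventually_analyticAt
  refine ⟨{p | p ∈ U ∧ AnalyticAt ℂ f (u p) ∧
      η.1 p = f (u p) * pdx u p ∧ η.2 p = f (u p) * pdy u p},
    hU.and (hfu.and hηf), fun p hp => hp.1, {z | AnalyticAt ℂ f z}, hf.eventually_analyticAt,
    f, fun z hz => hz, fun p hp => hp.2.1, fun p hp => hp.2.2⟩
end
end

section
/- Let U ⊆ ℂ² be a polydisc centered at 0, W = (ω_1,…,ω_k) a k-web on U, X = (P,Q) a transverse infinitesimal automorphism of W with X(0) ≠ (0,0), u_1,…,u_k the canonical first integrals with respect to X, x̃ a first integral of X (x̃(0) = 0, X(x̃) = 0, dx̃(0) ≠ (0,0)), and ω_{k+1} := (−Q,P). Suppose (α_1,…,α_k,β) is an abelian relation of the (k+1)-web W ⊠ F_X = (ω_1,…,ω_k,ω_{k+1}) such that L_X α_i = 0 for all i = 1,…,k. Then there exist constants c_1,…,c_k ∈ ℂ with c_1 + ⋯ + c_k = 0 such that, on a neighborhood of 0, α_i = c_i·du_i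 for all i (and consequently β = −(c_1·du_1 + ⋯ + c_k·du_k)). -/
open Complex Filter Topology

noncomputable section

/-!
The contraction `i_X α_i` is constant: by Cartan's formula `d(i_X α) = L_X α - i_X dα`, and both
terms vanish since `α_i` is closed and `X`-invariant. As `α_i` and `du_i` are both proportional to
`ω_i` and `i_X du_i = 1`, this gives `α_i = c_i du_i` with `c_i = (i_X α_i)(0)`. Finally `β` is
tangent to `X`, so `i_X β = 0`, and contracting `∑ α_i + β = 0` with `X` at `0` gives `∑ c_i = 0`.
-/

section Calculus

variable {P Q : Pt → ℂ} {α : Form1} {p : Pt}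

theorem fderiv_contr_apply (hA : DifferentiableAt ℂ α.1 p) (hB : DifferentiableAt ℂ α.2 p)
    (hP : DifferentiableAt ℂ P p) (hQ : DifferentiableAt ℂ Q p) (v : Pt) :
    fderiv ℂ (contr P Q α) p v = fderiv ℂ α.1 p v * P p + α.1 p * fderiv ℂ P p v +
      (fderiv ℂ α.2 p v * Q p + α.2 p * fderiv ℂ Q p v) := by
  unfold contr
  rw [fderiv_fun_add (f := fun q => α.1 q * P q) (g := fun q => α.2 q * Q q) (hA.mul hP)
    (hB.mul hQ), fderiv_fun_mul hA hP, fderiv_fun_mul hB hQ]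
  simp only [add_apply, smul_apply, smul_eq_mul]
  ring

theorem pdx_contr_of_closed (hA : DifferentiableAt ℂ α.1 p) (hB : DifferentiableAt ℂ α.2 p)
    (hP : DifferentiableAt ℂ P p) (hQ : DifferentiableAt ℂ Q p)
    (hcl : pdy α.1 p = pdx α.2 p) :
    pdx (contr P Q α) p = (lie P Q α).1 p := by
  simp only [lie, Xf, pdx, pdy, fderiv_contr_apply hA hB hP hQ] at hcl ⊢
  linear_combination (-Q p) * hcl

theorem pdy_contr_of_closed (hA : DifferentiableAt ℂ α.1 p) (hB : DifferentiableAt ℂ α.2 p)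
    (hP : DifferentiableAt ℂ P p) (hQ : DifferentiableAt ℂ Q p)
    (hcl : pdy α.1 p = pdx α.2 p) :
    pdy (contr P Q α) p = (lie P Q α).2 p := by
  simp only [lie, Xf, pdx, pdy, fderiv_contr_apply hA hB hP hQ] at hcl ⊢
  linear_combination P p * hcl

theorem fderiv_eq_zero_of_pdx_pdy {f : Pt → ℂ} (hx : pdx f p = 0) (hy : pdy f p = 0) :
    fderiv ℂ f p = 0 := by
  refine ContinuousLinearMap.ext fun v => ?_
  have hv : v = v.1 • ((1 : ℂ), (0 : ℂ)) + v.2 • ((0 : ℂ), (1 : ℂ)) := by simp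
  rw [hv, map_add, map_smul, map_smul]
  simp only [pdx, pdy] at hx hy
  simp [hx, hy]

end Calculus

theorem contr_eq_of_lie_eq_zero {U : Set Pt} (hO : IsOpen U) (hC : IsPreconnected U)
    {P Q : Pt → ℂ} (hP : DifferentiableOn ℂ P U) (hQ : DifferentiableOn ℂ Q U) {α : Form1}
    (hA : DifferentiableOn ℂ α.1 U) (hB : DifferentiableOn ℂ α.2 U) (hcl : IsClosedOn α U)
    (hL : ∀ p ∈ U, (lie P Q α).1 p = 0 ∧ (lie P Q α).2 p = 0) {p q : Pt} (hp : p ∈ U)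
    (hq : q ∈ U) : contr P Q α p = contr P Q α q := by
  have hd {f : Pt → ℂ} (hf : DifferentiableOn ℂ f U) {z : Pt} (hz : z ∈ U) :
      DifferentiableAt ℂ f z := hf.differentiableAt (hO.mem_nhds hz)
  refine hO.is_const_of_fderiv_eq_zero (𝕜 := ℂ) hC (fun z hz => ?_) (fun z hz => ?_) hp hq
  · exact (((hd hA hz).mul (hd hP hz)).add ((hd hB hz).mul (hd hQ hz))).differentiableWithinAt
  · refine fderiv_eq_zero_of_pdx_pdy ?_ ?_
    · rw [pdx_contr_of_closed (hd hA hz) (hd hB hz) (hd hP hz) (hd hQ hz) (hcl z hz)]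
      exact (hL z hz).1
    · rw [pdy_contr_of_closed (hd hA hz) (hd hB hz) (hd hP hz) (hd hQ hz) (hcl z hz)]
      exact (hL z hz).2

theorem eq_contr_mul_div_of_wedge_eq_zero {P Q : Pt → ℂ} {α ω : Form1} {p : Pt}
    (hw : wedge α ω p = 0) (hω : contr P Q ω p ≠ 0) :
    α.1 p = contr P Q α p * (ω.1 p / contr P Q ω p) ∧
      α.2 p = contr P Q α p * (ω.2 p / contr P Q ω p) := by
  simp only [wedge, contr] at hw hω ⊢
  rw [mul_div_assoc', mul_div_assoc', eq_div_iff hω, eq_div_iff hω]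
  exact ⟨by linear_combination Q p * hw, by linear_combination -P p * hw⟩

theorem IsPolydisc.isOpen {U : Set Pt} (hU : IsPolydisc U) : IsOpen U := by
  obtain ⟨r, s, -, -, rfl⟩ := hU
  exact Metric.isOpen_ball.prod Metric.isOpen_ball

theorem IsPolydisc.isPreconnected {U : Set Pt} (hU : IsPolydisc U) : IsPreconnected U := by
  obtain ⟨r, s, -, -, rfl⟩ := hU
  exact ((convex_ball (0 : ℂ) r).prod (convex_ball (0 : ℂ) s)).isPreconnected

theorem IsPolydisc.zero_mem {U : Set Pt} (hU : IsPolydisc U) : (0 : Pt) ∈ U := by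
  obtain ⟨r, s, hr, hs, rfl⟩ := hU
  exact ⟨Metric.mem_ball_self hr, Metric.mem_ball_self hs⟩

theorem wedge_rotate_eq_contr (P Q : Pt → ℂ) (β : Form1) (p : Pt) :
    wedge β (fun p => -Q p, P) p = contr P Q β p := by
  simp only [wedge, contr]
  ring

theorem contr_sum (P Q : Pt → ℂ) {k : ℕ} (η : Fin k → Form1) (p : Pt) :
    ∑ i, contr P Q (η i) p = (∑ i, (η i).1 p) * P p + (∑ i, (η i).2 p) * Q p := by
  simp only [contr, Finset.sum_mul, Finset.sum_add_distrib]

namespace IsAbelianRelOn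

variable {k : ℕ} {ω : Fin k → Form1} {ω' : Form1} {α : Fin k → Form1} {β : Form1} {V : Set Pt}

theorem analytic_castSucc (h : IsAbelianRelOn (Fin.snoc ω ω') (Fin.snoc α β) V) (i : Fin k) :
    AnalyticForm (α i) V := by
  simpa using h.analytic i.castSucc

theorem closed_castSucc (h : IsAbelianRelOn (Fin.snoc ω ω') (Fin.snoc α β) V) (i : Fin k) :
    IsClosedOn (α i) V := by
  simpa using h.closed i.castSucc

theorem tangent_castSucc (h : IsAbelianRelOn (Fin.snoc ω ω') (Fin.snoc α β) V) (i : Fin k)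
    {p : Pt} (hp : p ∈ V) : wedge (α i) (ω i) p = 0 := by
  simpa using h.tangent i.castSucc p hp

theorem tangent_last (h : IsAbelianRelOn (Fin.snoc ω ω') (Fin.snoc α β) V) {p : Pt}
    (hp : p ∈ V) : wedge β ω' p = 0 := by
  simpa using h.tangent (Fin.last k) p hp

theorem sum_snoc (h : IsAbelianRelOn (Fin.snoc ω ω') (Fin.snoc α β) V) {p : Pt} (hp : p ∈ V) :
    (∑ i, (α i).1 p) + β.1 p = 0 ∧ (∑ i, (α i).2 p) + β.2 p = 0 := by
  have h1 := h.sum_fst p hp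
  have h2 := h.sum_snd p hp
  simp only [Fin.sum_univ_castSucc, Fin.snoc_castSucc, Fin.snoc_last] at h1 h2
  exact ⟨h1, h2⟩

end IsAbelianRelOn

theorem stmt_8_general (k : ℕ) (U : Set Pt) (hU : IsPolydisc U) (ω : Fin k → Form1)
    (P Q : Pt → ℂ)
    (hP : AnalyticOnNhd ℂ P U) (hQ : AnalyticOnNhd ℂ Q U)
    (htr : IsTransverseTo P Q ω U)
    (u : Fin k → Pt → ℂ) (hu : ∀ i, IsCanonicalFI P Q (ω i) (u i) U)
    (α : Fin k → Form1) (β : Form1)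
    (hab : IsAbelianRelOn (Fin.snoc ω (fun p => -Q p, P)) (Fin.snoc α β) U)
    (hLα : ∀ i, ∀ p ∈ U, (lie P Q (α i)).1 p = 0 ∧ (lie P Q (α i)).2 p = 0) :
    ∃ c : Fin k → ℂ, ∑ i, c i = 0 ∧ ∃ V ∈ 𝓝 (0 : Pt),
      (∀ i, ∀ p ∈ V, (α i).1 p = c i * pdx (u i) p ∧ (α i).2 p = c i * pdy (u i) p) ∧
      (∀ p ∈ V, β.1 p = -∑ i, c i * pdx (u i) p ∧ β.2 p = -∑ i, c i * pdy (u i) p) := by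
  have h0 := hU.zero_mem
  set c : Fin k → ℂ := fun i => contr P Q (α i) 0
  have hαc (i : Fin k) (p : Pt) (hp : p ∈ U) :
      (α i).1 p = c i * pdx (u i) p ∧ (α i).2 p = c i * pdy (u i) p := by
    obtain ⟨hux, huy⟩ := (hu i).2.2 p hp
    have hc : c i = contr P Q (α i) p :=
      contr_eq_of_lie_eq_zero hU.isOpen hU.isPreconnected hP.differentiableOn
        hQ.differentiableOn (hab.analytic_castSucc i).1.differentiableOn
        (hab.analytic_castSucc i).2.differentiableOn (hab.closed_castSucc i) (hLα i) h0 hp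
    rw [hux, huy, hc]
    exact eq_contr_mul_div_of_wedge_eq_zero (hab.tangent_castSucc i hp) (htr i p hp)
  refine ⟨c, ?_, U, hU.isOpen.mem_nhds h0, hαc, fun p hp => ?_⟩
  · obtain ⟨h1, h2⟩ := hab.sum_snoc h0
    have hβ := wedge_rotate_eq_contr P Q β 0 ▸ hab.tangent_last h0
    rw [contr_sum]
    simp only [contr] at hβ
    linear_combination P 0 * h1 + Q 0 * h2 - hβ
  · obtain ⟨h1, h2⟩ := hab.sum_snoc hp
    rw [← Finset.sum_congr rfl fun i _ => (hαc i p hp).1,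
      ← Finset.sum_congr rfl fun i _ => (hαc i p hp).2]
    exact ⟨by linear_combination h1, by linear_combination h2⟩

/-- With `W` a `k`-web on a polydisc `U`, `X = (P,Q)` a transverse
infinitesimal automorphism with `X(0) ≠ (0,0)`, `u_i` the canonical first integrals,
`x̃` a first integral of `X` and `ω_{k+1} = (−Q,P)`: if `(α_1,…,α_k,β)` is an abelian
relation of `W ⊠ F_X` with `L_X α_i = 0` for all `i`, then there are constants `c_i`
summing to `0` with `α_i = c_i·du_i` near `0` (hence `β = −∑ c_i·du_i`). -/
theorem stmt_8 (k : ℕ) (U : Set Pt) (hU : IsPolydisc U) (ω : Fin k → Form1)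
    (hweb : IsWeb ω U) (P Q : Pt → ℂ)
    (hP : AnalyticOnNhd ℂ P U) (hQ : AnalyticOnNhd ℂ Q U)
    (hinf : IsInfAut P Q ω U) (htr : IsTransverseTo P Q ω U)
    (hX0 : (P 0, Q 0) ≠ (0, 0))
    (u : Fin k → Pt → ℂ) (hu : ∀ i, IsCanonicalFI P Q (ω i) (u i) U)
    (xt : Pt → ℂ) (hxt : AnalyticOnNhd ℂ xt U) (hxt0 : xt 0 = 0)
    (hXxt : ∀ p ∈ U, Xf P Q xt p = 0) (hdxt0 : (pdx xt 0, pdy xt 0) ≠ (0, 0))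
    (α : Fin k → Form1) (β : Form1)
    (hab : IsAbelianRelOn (Fin.snoc ω (fun p => -Q p, P)) (Fin.snoc α β) U)
    (hLα : ∀ i, ∀ p ∈ U, (lie P Q (α i)).1 p = 0 ∧ (lie P Q (α i)).2 p = 0) :
    ∃ c : Fin k → ℂ, ∑ i, c i = 0 ∧ ∃ V ∈ 𝓝 (0 : Pt),
      (∀ i, ∀ p ∈ V, (α i).1 p = c i * pdx (u i) p ∧ (α i).2 p = c i * pdy (u i) p) ∧
      (∀ p ∈ V, β.1 p = -∑ i, c i * pdx (u i) p ∧ β.2 p = -∑ i, c i * pdy (u i) p) :=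
  stmt_8_general k U hU ω P Q hP hQ htr u hu α β hab hLα
end
end
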